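/- Let 1 ≤ n' ≤ n, let α = {1,…,n'}, and let M be a matroid on N_n with r_M(N_n) ≥ 2 whose rank function spans an extreme ray of Γ_n. Suppose M has a circuit C with |C| ≥ 3 and 1 ≤ |C ∩ α| ≤ |C| − 1, such that it is not the case that |C| = 3 and |C ∩ α| = 2. If a, b > 0 and a·r_M + b·r_{U_{1,α}} is entropic, then a = log v for some integer v ≥ 2. -/

import Mathlib

open Finset

/-- Shannon entropy (natural log) of the random variable `X : Ω → S`
under the probability mass function `p : Ω → ℝ`. -/
noncomputable def Hent {Ω S : Type} [Fintype Ω] [DecidableEq S]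
    (p : Ω → ℝ) (X : Ω → S) : ℝ :=
  ∑ s ∈ Finset.univ.image X,
    Real.negMulLog (∑ ω ∈ Finset.univ.filter (fun ω => X ω = s), p ω)

/-- The joint random variable `(X_i)_{i ∈ A}`. -/
def joint {Ω : Type} {n : ℕ} (X : Fin n → Ω → ℕ) (A : Finset (Fin n)) :
    Ω → (A → ℕ) :=
  fun ω i => X i ω

/-- A set function `h : 2^{N_n} → ℝ` is entropic if it is the entropy function of
some random vector `(X_1, …, X_n)` on a finite probability space. -/
def IsEntropic {n : ℕ} (h : Finset (Fin n) → ℝ) : Prop :=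
  ∃ (N : ℕ) (p : Fin N → ℝ) (X : Fin n → Fin N → ℕ),
    (∀ ω, 0 ≤ p ω) ∧ (∑ ω, p ω) = 1 ∧
    ∀ A : Finset (Fin n), h A = Hent p (joint X A)

/-- The polymatroidal region Γ_n. -/
def PolymatroidRegion (n : ℕ) : Set (Finset (Fin n) → ℝ) :=
  {h | h ∅ = 0 ∧ (∀ A, 0 ≤ h A) ∧ (∀ A B, A ⊆ B → h A ≤ h B) ∧
       (∀ A B, h (A ∩ B) + h (A ∪ B) ≤ h A + h B)}

/-- A nonzero `h ∈ Γ_n` spans an extreme ray of `Γ_n` if whenever `h₁, h₂ ∈ Γ_n` and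
`h₁ + h₂` is a nonnegative multiple of `h`, both `h₁` and `h₂` are nonnegative
multiples of `h`. -/
def SpansExtremeRay {n : ℕ} (h : Finset (Fin n) → ℝ) : Prop :=
  h ∈ PolymatroidRegion n ∧ h ≠ 0 ∧
  ∀ h₁ h₂ : Finset (Fin n) → ℝ, h₁ ∈ PolymatroidRegion n → h₂ ∈ PolymatroidRegion n →
    (∃ c : ℝ, 0 ≤ c ∧ h₁ + h₂ = c • h) →
    (∃ c₁ : ℝ, 0 ≤ c₁ ∧ h₁ = c₁ • h) ∧ (∃ c₂ : ℝ, 0 ≤ c₂ ∧ h₂ = c₂ • h)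

/-- `F ⊆ Γ_n` is a face of `Γ_n` if whenever `h₁, h₂ ∈ Γ_n` and `h₁ + h₂ ∈ F`,
both `h₁` and `h₂` lie in `F`. -/
def IsFace (n : ℕ) (F : Set (Finset (Fin n) → ℝ)) : Prop :=
  F ⊆ PolymatroidRegion n ∧
  ∀ h₁ h₂ : Finset (Fin n) → ℝ, h₁ ∈ PolymatroidRegion n → h₂ ∈ PolymatroidRegion n →
    h₁ + h₂ ∈ F → h₁ ∈ F ∧ h₂ ∈ F

/-- A matroid on ground set `N_n`, given by its rank function. -/
structure MatroidRk (n : ℕ) where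
  r : Finset (Fin n) → ℕ
  le_card : ∀ A, r A ≤ A.card
  mono : ∀ ⦃A B : Finset (Fin n)⦄, A ⊆ B → r A ≤ r B
  submod : ∀ A B : Finset (Fin n), r (A ∩ B) + r (A ∪ B) ≤ r A + r B

/-- The rank function of a matroid, viewed as a real-valued set function. -/
def MatroidRk.rr {n : ℕ} (M : MatroidRk n) : Finset (Fin n) → ℝ :=
  fun A => (M.r A : ℝ)

/-- A set is independent if its rank equals its cardinality. -/
def MatroidRk.Indep {n : ℕ} (M : MatroidRk n) (A : Finset (Fin n)) : Prop :=
  M.r A = A.card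

/-- A circuit is a minimal dependent set. -/
def MatroidRk.IsCircuit {n : ℕ} (M : MatroidRk n) (C : Finset (Fin n)) : Prop :=
  ¬ M.Indep C ∧ ∀ A ⊂ C, M.Indep A

/-- An element is a loop if its rank is zero. -/
def MatroidRk.IsLoop {n : ℕ} (M : MatroidRk n) (e : Fin n) : Prop :=
  M.r {e} = 0

/-- Two distinct elements are parallel if each has rank one and together they have rank one. -/
def MatroidRk.Parallel {n : ℕ} (M : MatroidRk n) (e f : Fin n) : Prop :=
  e ≠ f ∧ M.r {e} = 1 ∧ M.r {f} = 1 ∧ M.r {e, f} = 1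

/-- The subset `{1, …, k}` of `N_n` (in `Fin n`, the elements with value `< k`). -/
def alphaSet (n k : ℕ) : Finset (Fin n) :=
  Finset.univ.filter (fun i => (i : ℕ) < k)

/-- The rank function of the rank-one matroid `U_{1,k}^n`:
`A ↦ 1` if `A ∩ {1, …, k} ≠ ∅` and `0` otherwise. -/
def rUone (n k : ℕ) : Finset (Fin n) → ℝ :=
  fun A => if (A ∩ alphaSet n k).Nonempty then 1 else 0

/-- The rank function of the uniform matroid `U_{n-1,n}`: `A ↦ min (n-1) |A|`. -/
def rUnif (n : ℕ) : Finset (Fin n) → ℝ :=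
  fun A => ((min (n - 1) A.card : ℕ) : ℝ)

/-- The p-characteristic set `χ_M` of a matroid `M`. -/
def chi {n : ℕ} (M : MatroidRk n) : Set ℤ :=
  {v | 2 ≤ v ∧ IsEntropic (fun A => Real.log (v : ℝ) * M.rr A)}

/-!
Write `h = a r_M + b r_{U_{1,α}}` as `h A = H(X_A)`. Choose `i ∈ C \ α`, `k ∈ C ∩ α` and a third
element `j ∈ C` such that adding `j` to `D = C \ {i, j, k}` does not change `r_{U_{1,α}}` (either
`j ∉ α`, or `D` meets `α`; the excluded case `|C| = 3`, `|C ∩ α| = 2` is exactly when no such `j`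
exists). Proper subsets of a circuit are independent, so `h` is modular on them and constant on
`C` and its two subsets `C - j`, `C - i`. In entropic terms: `X_i ⊥ X_D`, `X_i ⊥ X_k | X_D`,
`X_j ⊥ X_k | X_D`, `X_i ⊥ X_j | X_D`, while `X_j` is a function of `(X_i, X_k, X_D)` and `X_i` one of
`(X_j, X_k, X_D)`. Conditionally on `X_D = d`, the values of `(X_i, X_k, X_j)` thus form a Latin
square, which forces `X_i` to be uniform on its support; hence `a = H(X_i) = log v`.

Equality in a Shannon inequality is turned into (conditional) independence through the equality
case of Gibbs' inequality.
-/

section Mass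

variable {Ω : Type} [Fintype Ω] {p : Ω → ℝ}

open scoped Classical in
noncomputable def mass (p : Ω → ℝ) (P : Ω → Prop) : ℝ :=
  ∑ ω ∈ univ.filter P, p ω

theorem mass_nonneg (hp : ∀ ω, 0 ≤ p ω) (P : Ω → Prop) : 0 ≤ mass p P :=
  sum_nonneg fun ω _ => hp ω

theorem mass_mono (hp : ∀ ω, 0 ≤ p ω) {P Q : Ω → Prop} (h : ∀ ω, P ω → Q ω) :
    mass p P ≤ mass p Q := by
  classical
  exact sum_le_sum_of_subset_of_nonneg (monotone_filter_right _ fun ω _ => h ω) fun ω _ _ => hp ω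

theorem mass_congr (hp : ∀ ω, 0 ≤ p ω) {P Q : Ω → Prop} (h : ∀ ω, 0 < p ω → (P ω ↔ Q ω)) :
    mass p P = mass p Q := by
  classical
  simp only [mass, sum_filter]
  refine sum_congr rfl fun ω _ => ?_
  rcases (hp ω).lt_or_eq with hω | hω
  · simp only [h ω hω]
  · simp [← hω]

theorem mass_pos_iff (hp : ∀ ω, 0 ≤ p ω) {P : Ω → Prop} :
    0 < mass p P ↔ ∃ ω, 0 < p ω ∧ P ω := by
  classical
  simp only [mass, sum_pos_iff_of_nonneg fun ω _ => hp ω, mem_filter, mem_univ, true_and]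
  exact exists_congr fun ω => and_comm

theorem mass_true (hs : ∑ ω, p ω = 1) : mass p (fun _ => True) = 1 := by
  simpa [mass] using hs

theorem of_mass_le_mass (hp : ∀ ω, 0 ≤ p ω) {P Q : Ω → Prop} (hPQ : ∀ ω, P ω → Q ω)
    (hQP : mass p Q ≤ mass p P) {ω : Ω} (hω : 0 < p ω) (hQ : Q ω) : P ω := by
  classical
  by_contra hP
  refine hQP.not_gt (sum_lt_sum_of_subset (monotone_filter_right _ fun ω _ => hPQ ω) ?_ ?_ hω ?_)
  · simpa using hQ
  · simpa using hP
  · exact fun ω _ _ => hp ω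

theorem sum_mass_mul {T : Type} [DecidableEq T] (Z : Ω → T) {s : Finset T}
    (hs : ∀ ω, Z ω ∈ s) (f : T → ℝ) :
    ∑ t ∈ s, mass p (fun ω => Z ω = t) * f t = ∑ ω, p ω * f (Z ω) := by
  classical
  rw [← sum_fiberwise_of_maps_to (s := univ) (fun ω _ => hs ω)]
  refine sum_congr rfl fun t _ => ?_
  rw [mass, sum_mul]
  exact sum_congr (by ext; simp) fun ω hω => by rw [(mem_filter.1 hω).2]

theorem sum_mass_and {T : Type} [DecidableEq T] (Z : Ω → T) (P : Ω → Prop) {s : Finset T}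
    (hs : ∀ ω, Z ω ∈ s) : ∑ t ∈ s, mass p (fun ω => Z ω = t ∧ P ω) = mass p P := by
  classical
  rw [mass, ← sum_fiberwise_of_maps_to (fun ω _ => hs ω)]
  exact sum_congr rfl fun t _ => sum_congr (by ext; simp [and_comm]) fun _ _ => rfl

theorem Hent_eq_neg_sum {S : Type} [DecidableEq S] (X : Ω → S) :
    Hent p X = -∑ ω, p ω * Real.log (mass p fun ω' => X ω' = X ω) := by
  classical
  rw [← sum_mass_mul X (fun ω => mem_image_of_mem X (mem_univ ω))
    fun s => Real.log (mass p fun ω => X ω = s), ← sum_neg_distrib]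
  refine sum_congr rfl fun s _ => ?_
  rw [Real.negMulLog, neg_mul, mass]
  congr

theorem Hent_congr {S T : Type} [DecidableEq S] [DecidableEq T] (X : Ω → S) (Y : Ω → T)
    (h : ∀ ω₁ ω₂, X ω₁ = X ω₂ ↔ Y ω₁ = Y ω₂) : Hent p X = Hent p Y := by
  simp only [Hent_eq_neg_sum, h]

end Mass

open InformationTheory in
/-- Termwise `q log (q / r) = r klFun (q / r) + q - r`, and `klFun ≥ 0` vanishes only at `1`. -/
theorem eq_of_sum_mul_log_div_eq_zero {ι : Type*} (s : Finset ι) {q r : ι → ℝ}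
    (hq : ∀ i ∈ s, 0 ≤ q i) (hr : ∀ i ∈ s, 0 ≤ r i) (hqr : ∀ i ∈ s, r i = 0 → q i = 0)
    (hsum : ∑ i ∈ s, q i = ∑ i ∈ s, r i) (h : ∑ i ∈ s, q i * Real.log (q i / r i) = 0) :
    ∀ i ∈ s, q i = r i := by
  have hkl : ∀ i ∈ s, q i * Real.log (q i / r i) = r i * klFun (q i / r i) + q i - r i := by
    intro i hi
    rcases (hr i hi).lt_or_eq with hri | hri
    · rw [klFun_apply]
      field_simp
      ring
    · simp [← hri, hqr i hi hri.symm]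
  have hzero : ∑ i ∈ s, r i * klFun (q i / r i) = 0 := by
    rw [sum_congr rfl hkl, sum_sub_distrib, sum_add_distrib, hsum] at h
    linarith
  intro i hi
  have hi0 := (sum_eq_zero_iff_of_nonneg fun j hj =>
    mul_nonneg (hr j hj) (klFun_nonneg (div_nonneg (hq j hj) (hr j hj)))).1 hzero i hi
  rcases mul_eq_zero.1 hi0 with hri | hkli
  · rw [hri, hqr i hi hri]
  · rcases (hr i hi).lt_or_eq with hri | hri
    · rw [klFun_eq_zero_iff (div_nonneg (hq i hi) (hr i hi)), div_eq_one_iff_eq hri.ne'] at hkli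
      exact hkli
    · rw [← hri, hqr i hi hri.symm]

theorem mul_log_div_mul_div_eq {q a b c : ℝ} (hq : 0 ≤ q) (hqa : q ≤ a) (hqb : q ≤ b)
    (hac : a ≤ c) :
    q * Real.log (q / (a * b / c)) =
      q * (Real.log q + Real.log c - Real.log a - Real.log b) := by
  rcases hq.lt_or_eq with hq | rfl
  · have ha : 0 < a := hq.trans_le hqa
    have hb : 0 < b := hq.trans_le hqb
    have hc : 0 < c := ha.trans_le hac
    rw [Real.log_div hq.ne' (by positivity), Real.log_div (by positivity) hc.ne',
      Real.log_mul ha.ne' hb.ne']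
    ring
  · simp

section Independence

variable {Ω S₁ S₂ S₃ : Type} [Fintype Ω] {p : Ω → ℝ}

def CondIndep (p : Ω → ℝ) (U : Ω → S₁) (V : Ω → S₂) (W : Ω → S₃) : Prop :=
  ∀ u v w, mass p (fun ω => U ω = u ∧ V ω = v ∧ W ω = w) * mass p (fun ω => W ω = w) =
    mass p (fun ω => U ω = u ∧ W ω = w) * mass p (fun ω => V ω = v ∧ W ω = w)

theorem sum_mass_mul_mass_div_mass [DecidableEq S₁] [DecidableEq S₂] [DecidableEq S₃]
    (U : Ω → S₁) (V : Ω → S₂) (W : Ω → S₃) :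
    ∑ t ∈ univ.image U ×ˢ univ.image V ×ˢ univ.image W,
      (mass p fun ω => U ω = t.1 ∧ W ω = t.2.2) * (mass p fun ω => V ω = t.2.1 ∧ W ω = t.2.2) /
        mass p (fun ω => W ω = t.2.2) = ∑ ω, p ω := by
  classical
  have hU ω : U ω ∈ univ.image U := mem_image_of_mem U (mem_univ ω)
  have hV ω : V ω ∈ univ.image V := mem_image_of_mem V (mem_univ ω)
  have hW ω : W ω ∈ univ.image W := mem_image_of_mem W (mem_univ ω)
  calc _ = ∑ w ∈ univ.image W, (∑ u ∈ univ.image U, mass p fun ω => U ω = u ∧ W ω = w) *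
        (∑ v ∈ univ.image V, mass p fun ω => V ω = v ∧ W ω = w) / mass p (fun ω => W ω = w) := by
        simp only [sum_product_right, sum_mul_sum, sum_div]
        exact sum_congr rfl fun _ _ => sum_comm
    _ = ∑ w ∈ univ.image W, mass p (fun ω => W ω = w) * 1 := by
        refine sum_congr rfl fun w _ => ?_
        rw [sum_mass_and U _ hU, sum_mass_and V _ hV, mul_self_div_self, mul_one]
    _ = ∑ ω, p ω := by simpa only [mul_one] using sum_mass_mul (p := p) W hW fun _ => 1

theorem condIndep_of_mass_eq_div (hp : ∀ ω, 0 ≤ p ω) {U : Ω → S₁} {V : Ω → S₂} {W : Ω → S₃}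
    (h : ∀ ω₁ ω₂ ω₃, (mass p fun ω => U ω = U ω₁ ∧ V ω = V ω₂ ∧ W ω = W ω₃) =
      (mass p fun ω => U ω = U ω₁ ∧ W ω = W ω₃) * (mass p fun ω => V ω = V ω₂ ∧ W ω = W ω₃) /
        mass p (fun ω => W ω = W ω₃)) :
    CondIndep p U V W := by
  intro u v w
  have hqA : (mass p fun ω => U ω = u ∧ V ω = v ∧ W ω = w) ≤ mass p fun ω => U ω = u ∧ W ω = w :=
    mass_mono hp fun _ h => ⟨h.1, h.2.2⟩
  have hqB : (mass p fun ω => U ω = u ∧ V ω = v ∧ W ω = w) ≤ mass p fun ω => V ω = v ∧ W ω = w :=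
    mass_mono hp fun _ h => h.2
  by_cases hAB : (0 < mass p fun ω => U ω = u ∧ W ω = w) ∧ 0 < mass p fun ω => V ω = v ∧ W ω = w
  · obtain ⟨ω₁, -, rfl, rfl⟩ := (mass_pos_iff hp).1 hAB.1
    obtain ⟨ω₂, -, rfl, -⟩ := (mass_pos_iff hp).1 hAB.2
    rw [h]
    exact div_mul_cancel₀ _ (hAB.1.trans_le (mass_mono hp fun _ h => h.2)).ne'
  · rw [not_and_or, not_lt, not_lt] at hAB
    rcases hAB with hA | hB
    · rw [le_antisymm (hqA.trans hA) (mass_nonneg hp _), le_antisymm hA (mass_nonneg hp _)]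
      ring
    · rw [le_antisymm (hqB.trans hB) (mass_nonneg hp _), le_antisymm hB (mass_nonneg hp _)]
      ring

theorem condIndep_of_Hent_add_eq [DecidableEq S₁] [DecidableEq S₂] [DecidableEq S₃]
    (hp : ∀ ω, 0 ≤ p ω) (U : Ω → S₁) (V : Ω → S₂) (W : Ω → S₃)
    (h : Hent p (fun ω => (U ω, W ω)) + Hent p (fun ω => (V ω, W ω)) =
      Hent p (fun ω => (U ω, V ω, W ω)) + Hent p W) :
    CondIndep p U V W := by
  classical
  set T := univ.image U ×ˢ univ.image V ×ˢ univ.image W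
  let q : S₁ × S₂ × S₃ → ℝ := fun t => mass p fun ω => U ω = t.1 ∧ V ω = t.2.1 ∧ W ω = t.2.2
  let A : S₁ × S₂ × S₃ → ℝ := fun t => mass p fun ω => U ω = t.1 ∧ W ω = t.2.2
  let B : S₁ × S₂ × S₃ → ℝ := fun t => mass p fun ω => V ω = t.2.1 ∧ W ω = t.2.2
  let C : S₁ × S₂ × S₃ → ℝ := fun t => mass p fun ω => W ω = t.2.2
  have hq0 t : 0 ≤ q t := mass_nonneg hp _
  have hqA t : q t ≤ A t := mass_mono hp fun _ h => ⟨h.1, h.2.2⟩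
  have hqB t : q t ≤ B t := mass_mono hp fun _ h => h.2
  have hAC t : A t ≤ C t := mass_mono hp fun _ h => h.2
  have hT ω : (U ω, V ω, W ω) ∈ T := by simp [T]
  have hsum (f : S₁ × S₂ × S₃ → ℝ) : ∑ t ∈ T, q t * f t = ∑ ω, p ω * f (U ω, V ω, W ω) := by
    simp only [q, ← Prod.mk.injEq]
    exact sum_mass_mul _ hT f
  -- The submodularity gap is the relative entropy of the joint law `q` with respect to the
  -- conditionally independent coupling `A B / C` of its marginals.
  have hgap : ∑ t ∈ T, q t * Real.log (q t / (A t * B t / C t)) = 0 := by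
    simp only [fun t => mul_log_div_mul_div_eq (hq0 t) (hqA t) (hqB t) (hAC t), hsum]
    simp only [Hent_eq_neg_sum, Prod.mk.injEq] at h
    simp only [mul_sub, mul_add, sum_sub_distrib, sum_add_distrib]
    linarith
  have hqr : ∀ t ∈ T, A t * B t / C t = 0 → q t = 0 := by
    intro t _ ht
    refine le_antisymm ?_ (hq0 t)
    rcases div_eq_zero_iff.1 ht with hAB | hC
    · rcases mul_eq_zero.1 hAB with hA | hB
      · exact hA ▸ hqA t
      · exact hB ▸ hqB t
    · exact hC ▸ (hqA t).trans (hAC t)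
  have hqT := eq_of_sum_mul_log_div_eq_zero T (fun t _ => hq0 t)
    (fun t _ => div_nonneg (mul_nonneg (mass_nonneg hp _) (mass_nonneg hp _)) (mass_nonneg hp _))
    hqr (by simpa using (hsum 1).trans (sum_mass_mul_mass_div_mass U V W).symm) hgap
  exact condIndep_of_mass_eq_div hp fun ω₁ ω₂ ω₃ => hqT (U ω₁, V ω₂, W ω₃) (by simp [T])

def Indep (p : Ω → ℝ) (U : Ω → S₁) (V : Ω → S₂) : Prop :=
  ∀ u v, mass p (fun ω => U ω = u ∧ V ω = v) = mass p (fun ω => U ω = u) * mass p (fun ω => V ω = v)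

theorem Hent_const (hs : ∑ ω, p ω = 1) {S : Type} [DecidableEq S] (s : S) :
    Hent p (fun _ : Ω => s) = 0 := by
  simp [Hent_eq_neg_sum, mass_true hs]

theorem indep_of_Hent_pair_eq_add [DecidableEq S₁] [DecidableEq S₂] (hp : ∀ ω, 0 ≤ p ω)
    (hs : ∑ ω, p ω = 1) (U : Ω → S₁) (V : Ω → S₂)
    (h : Hent p (fun ω => (U ω, V ω)) = Hent p U + Hent p V) : Indep p U V := by
  have hci := condIndep_of_Hent_add_eq hp U V (fun _ => ()) <| by
    rw [Hent_const hs, Hent_congr (fun ω => (U ω, ())) U (by simp),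
      Hent_congr (fun ω => (V ω, ())) V (by simp),
      Hent_congr (fun ω => (U ω, V ω, ())) (fun ω => (U ω, V ω)) (by simp), h]
    ring
  intro u v
  simpa [mass_true hs] using hci u v ()

theorem eq_of_Hent_pair_eq [DecidableEq S₁] [DecidableEq S₂] (hp : ∀ ω, 0 ≤ p ω)
    (X : Ω → S₁) (Y : Ω → S₂) (h : Hent p (fun ω => (X ω, Y ω)) = Hent p Y)
    {ω₁ ω₂ : Ω} (hω₁ : 0 < p ω₁) (hω₂ : 0 < p ω₂) (hY : Y ω₁ = Y ω₂) : X ω₁ = X ω₂ := by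
  have hci := condIndep_of_Hent_add_eq hp X X Y <| by
    rw [Hent_congr (fun ω => (X ω, X ω, Y ω)) (fun ω => (X ω, Y ω)) (by simp), h]
  have hXY := hci (X ω₁) (X ω₁) (Y ω₁)
  simp only [and_self_left] at hXY
  have hpos : 0 < mass p fun ω => X ω = X ω₁ ∧ Y ω = Y ω₁ := (mass_pos_iff hp).2 ⟨ω₁, hω₁, rfl, rfl⟩
  have hYX : (mass p fun ω => Y ω = Y ω₁) ≤ mass p fun ω => X ω = X ω₁ ∧ Y ω = Y ω₁ :=
    (mul_left_cancel₀ hpos.ne' hXY).le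
  exact ((of_mass_le_mass hp (fun _ h => h.2) hYX hω₂ hY.symm).1).symm

end Independence

section Uniform

variable {Ω S₁ S₂ S₃ S₄ : Type} [Fintype Ω] {p : Ω → ℝ}

theorem mass_eq_mass_of_latin (hp : ∀ ω, 0 ≤ p ω)
    {F : Ω → S₁} {G : Ω → S₂} {K : Ω → S₃} {W : Ω → S₄}
    (hFW : Indep p F W) (hFK : CondIndep p F K W) (hGK : CondIndep p G K W)
    (hFG : CondIndep p F G W)
    (hG : ∀ ω₁ ω₂, 0 < p ω₁ → 0 < p ω₂ → F ω₁ = F ω₂ → K ω₁ = K ω₂ → W ω₁ = W ω₂ →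
      G ω₁ = G ω₂)
    (hF : ∀ ω₁ ω₂, 0 < p ω₁ → 0 < p ω₂ → G ω₁ = G ω₂ → K ω₁ = K ω₂ → W ω₁ = W ω₂ →
      F ω₁ = F ω₂)
    {ω₁ ω₂ : Ω} (hω₁ : 0 < p ω₁) (hω₂ : 0 < p ω₂) :
    (mass p fun ω => F ω = F ω₁) = mass p fun ω => F ω = F ω₂ := by
  set z := G ω₂
  set d := W ω₂
  have hd : 0 < mass p fun ω => W ω = d := (mass_pos_iff hp).2 ⟨ω₂, hω₂, rfl⟩
  have hzd : 0 < mass p fun ω => G ω = z ∧ W ω = d := (mass_pos_iff hp).2 ⟨ω₂, hω₂, rfl, rfl⟩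
  -- For every `x` in the support of `F`, pick `ω'` with `(F, G, W) ω' = (x, z, d)`; then the
  -- Latin-square property identifies the fibres `F = x` and `G = z` over `(K, W) = (K ω', d)`.
  suffices key : ∀ ω, 0 < p ω →
      (mass p fun ω' => F ω' = F ω) * mass p (fun ω' => W ω' = d) =
        mass p fun ω' => G ω' = z ∧ W ω' = d from
    mul_right_cancel₀ hd.ne' ((key ω₁ hω₁).trans (key ω₂ hω₂).symm)
  intro ω hω
  set x := F ω
  have hx : 0 < mass p fun ω' => F ω' = x := (mass_pos_iff hp).2 ⟨ω, hω, rfl⟩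
  have hxzd : 0 < mass p fun ω' => F ω' = x ∧ G ω' = z ∧ W ω' = d := by
    have h := hFG x z d
    rw [hFW] at h
    exact pos_of_mul_pos_left (h ▸ by positivity) hd.le
  obtain ⟨ω', hω', hFx, hGz, hWd⟩ := (mass_pos_iff hp).1 hxzd
  set y := K ω'
  have hyd : 0 < mass p fun ω => K ω = y ∧ W ω = d := (mass_pos_iff hp).2 ⟨ω', hω', rfl, hWd⟩
  have hswap : (mass p fun ω => G ω = z ∧ K ω = y ∧ W ω = d) =
      mass p fun ω => F ω = x ∧ K ω = y ∧ W ω = d := by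
    refine mass_congr hp fun ω hω => ⟨fun ⟨hG', hK', hW'⟩ => ⟨?_, hK', hW'⟩,
      fun ⟨hF', hK', hW'⟩ => ⟨?_, hK', hW'⟩⟩
    · exact (hF ω ω' hω hω' (hG'.trans hGz.symm) hK' (hW'.trans hWd.symm)).trans hFx
    · exact (hG ω ω' hω hω' (hF'.trans hFx.symm) hK' (hW'.trans hWd.symm)).trans hGz
  have h := hGK z y d
  rw [hswap, hFK, hFW] at h
  exact mul_right_cancel₀ hyd.ne' h

end Uniform

theorem Hent_eq_log_card_of_mass_eq {Ω S : Type} [Fintype Ω] [DecidableEq S] {p : Ω → ℝ}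
    (hp : ∀ ω, 0 ≤ p ω) (hs : ∑ ω, p ω = 1) (X : Ω → S)
    (h : ∀ ω₁ ω₂, 0 < p ω₁ → 0 < p ω₂ → mass p (fun ω => X ω = X ω₁) = mass p fun ω => X ω = X ω₂) :
    Hent p X = Real.log ((univ.image X).filter fun s => 0 < mass p fun ω => X ω = s).card := by
  obtain ⟨ω₀, hω₀⟩ : ∃ ω, 0 < p ω := by
    by_contra! h0
    have := sum_nonpos fun ω (_ : ω ∈ univ) => h0 ω
    linarith
  set c := mass p fun ω => X ω = X ω₀
  have hc : ∀ s, 0 < (mass p fun ω => X ω = s) → (mass p fun ω => X ω = s) = c := by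
    intro s hs
    obtain ⟨ω, hω, rfl⟩ := (mass_pos_iff hp).1 hs
    exact h ω ω₀ hω hω₀
  have hcard : (((univ.image X).filter fun s => 0 < mass p fun ω => X ω = s).card : ℝ) * c = 1 := by
    calc _ = ∑ s ∈ (univ.image X).filter (fun s => 0 < mass p fun ω => X ω = s), c := by
          rw [sum_const, nsmul_eq_mul]
      _ = ∑ s ∈ (univ.image X).filter (fun s => 0 < mass p fun ω => X ω = s),
            mass p fun ω => X ω = s := sum_congr rfl fun s hs => (hc s (mem_filter.1 hs).2).symm
      _ = ∑ s ∈ univ.image X, mass p fun ω => X ω = s :=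
          sum_filter_of_ne fun s _ hs => (mass_nonneg hp _).lt_of_ne' hs
      _ = 1 := by
          simpa [hs] using sum_mass_mul (p := p) X (fun ω => mem_image_of_mem X (mem_univ ω))
            fun _ => 1
  have hent : Hent p X = -Real.log c := by
    rw [Hent_eq_neg_sum, neg_inj, ← one_mul (Real.log c), ← hs, sum_mul]
    refine sum_congr rfl fun ω _ => ?_
    rcases (hp ω).lt_or_eq with hω | hω
    · rw [h ω ω₀ hω hω₀]
    · simp [← hω]
  rw [hent, ← Real.log_inv, inv_eq_of_mul_eq_one_left hcard]

theorem joint_union_eq_iff {Ω : Type} {n : ℕ} (X : Fin n → Ω → ℕ) (A B : Finset (Fin n))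
    (ω₁ ω₂ : Ω) :
    joint X (A ∪ B) ω₁ = joint X (A ∪ B) ω₂ ↔
      joint X A ω₁ = joint X A ω₂ ∧ joint X B ω₁ = joint X B ω₂ := by
  simp only [funext_iff, Subtype.forall, joint, mem_union]
  constructor
  · exact fun h => ⟨fun l hl => h l (.inl hl), fun l hl => h l (.inr hl)⟩
  · rintro ⟨hA, hB⟩ l (hl | hl)
    exacts [hA l hl, hB l hl]

section Joint

variable {Ω : Type} [Fintype Ω] {p : Ω → ℝ} {n : ℕ} (X : Fin n → Ω → ℕ)

theorem Hent_joint_pair (A B : Finset (Fin n)) :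
    Hent p (fun ω => (joint X A ω, joint X B ω)) = Hent p (joint X (A ∪ B)) :=
  Hent_congr _ _ fun _ _ => by rw [joint_union_eq_iff, Prod.mk.injEq]

theorem Hent_joint_triple (A B C : Finset (Fin n)) :
    Hent p (fun ω => (joint X A ω, joint X B ω, joint X C ω)) = Hent p (joint X (A ∪ (B ∪ C))) :=
  Hent_congr _ _ fun _ _ => by simp only [joint_union_eq_iff, Prod.mk.injEq]

theorem indep_joint (hp : ∀ ω, 0 ≤ p ω) (hs : ∑ ω, p ω = 1) {A B : Finset (Fin n)}
    (h : Hent p (joint X (A ∪ B)) = Hent p (joint X A) + Hent p (joint X B)) :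
    Indep p (joint X A) (joint X B) :=
  indep_of_Hent_pair_eq_add hp hs _ _ (by rw [Hent_joint_pair, h])

theorem condIndep_joint (hp : ∀ ω, 0 ≤ p ω) {A B C : Finset (Fin n)}
    (h : Hent p (joint X (A ∪ C)) + Hent p (joint X (B ∪ C)) =
      Hent p (joint X (A ∪ (B ∪ C))) + Hent p (joint X C)) :
    CondIndep p (joint X A) (joint X B) (joint X C) :=
  condIndep_of_Hent_add_eq hp _ _ _ (by rw [Hent_joint_pair, Hent_joint_pair, Hent_joint_triple, h])

theorem joint_eq_of_Hent_union_eq (hp : ∀ ω, 0 ≤ p ω) {A B : Finset (Fin n)}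
    (h : Hent p (joint X (A ∪ B)) = Hent p (joint X B)) {ω₁ ω₂ : Ω} (hω₁ : 0 < p ω₁)
    (hω₂ : 0 < p ω₂) (hB : joint X B ω₁ = joint X B ω₂) : joint X A ω₁ = joint X A ω₂ :=
  eq_of_Hent_pair_eq hp _ _ (by rw [Hent_joint_pair, h]) hω₁ hω₂ hB

theorem exists_Hent_joint_eq_log (hp : ∀ ω, 0 ≤ p ω) (hs : ∑ ω, p ω = 1) {I J K D : Finset (Fin n)}
    (hID : Hent p (joint X (I ∪ D)) = Hent p (joint X I) + Hent p (joint X D))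
    (hIK : Hent p (joint X (I ∪ D)) + Hent p (joint X (K ∪ D)) =
      Hent p (joint X (I ∪ (K ∪ D))) + Hent p (joint X D))
    (hJK : Hent p (joint X (J ∪ D)) + Hent p (joint X (K ∪ D)) =
      Hent p (joint X (J ∪ (K ∪ D))) + Hent p (joint X D))
    (hIJ : Hent p (joint X (I ∪ D)) + Hent p (joint X (J ∪ D)) =
      Hent p (joint X (I ∪ (J ∪ D))) + Hent p (joint X D))
    (hJ : Hent p (joint X (J ∪ (I ∪ (K ∪ D)))) = Hent p (joint X (I ∪ (K ∪ D))))
    (hI : Hent p (joint X (I ∪ (J ∪ (K ∪ D)))) = Hent p (joint X (J ∪ (K ∪ D)))) :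
    ∃ v : ℕ, Hent p (joint X I) = Real.log v := by
  refine ⟨_, Hent_eq_log_card_of_mass_eq hp hs _ fun ω₁ ω₂ hω₁ hω₂ => mass_eq_mass_of_latin hp
    (indep_joint X hp hs hID) (condIndep_joint X hp hIK) (condIndep_joint X hp hJK)
    (condIndep_joint X hp hIJ) ?_ ?_ hω₁ hω₂⟩
  · intro ω₁ ω₂ hω₁ hω₂ hI' hK' hD'
    refine joint_eq_of_Hent_union_eq X hp hJ hω₁ hω₂ ?_
    simp only [joint_union_eq_iff]
    exact ⟨hI', hK', hD'⟩
  · intro ω₁ ω₂ hω₁ hω₂ hJ' hK' hD'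
    refine joint_eq_of_Hent_union_eq X hp hI hω₁ hω₂ ?_
    simp only [joint_union_eq_iff]
    exact ⟨hJ', hK', hD'⟩

end Joint

theorem exists_circuit_triple {ι : Type*} [DecidableEq ι] {C α : Finset ι} (hC3 : 3 ≤ C.card)
    (h1 : 1 ≤ (C ∩ α).card) (h2 : (C ∩ α).card ≤ C.card - 1)
    (hnot : ¬ (C.card = 3 ∧ (C ∩ α).card = 2)) :
    ∃ i ∈ C, ∃ j ∈ C, ∃ k ∈ C, i ∉ α ∧ k ∈ α ∧ j ≠ i ∧ j ≠ k ∧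
      (j ∉ α ∨ ∃ l ∈ C ∩ α, l ≠ j ∧ l ≠ k) := by
  have hcard := card_sdiff_add_card_inter C α
  by_cases hout : 1 < (C \ α).card
  · obtain ⟨i, hi, j, hj, hji⟩ := one_lt_card.1 hout
    obtain ⟨k, hk⟩ := card_pos.1 (show 0 < (C ∩ α).card by omega)
    rw [mem_sdiff] at hi hj
    rw [mem_inter] at hk
    exact ⟨i, hi.1, j, hj.1, k, hk.1, hi.2, hk.2, hji.symm, fun h => hj.2 (h ▸ hk.2), .inl hj.2⟩
  · obtain ⟨i, hi⟩ := card_pos.1 (show 0 < (C \ α).card by omega)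
    obtain ⟨k, hk, j, hj, l, hl, hkj, hkl, hjl⟩ := two_lt_card.1 (show 2 < (C ∩ α).card by omega)
    rw [mem_sdiff] at hi
    rw [mem_inter] at hk hj
    exact ⟨i, hi.1, j, hj.1, k, hk.1, hi.2, hk.2, fun h => hi.2 (h ▸ hj.2), hkj.symm,
      .inr ⟨l, hl, hjl.symm, hkl.symm⟩⟩

theorem exists_circuit_split {ι : Type*} [DecidableEq ι] {C α : Finset ι} (hC3 : 3 ≤ C.card)
    (h1 : 1 ≤ (C ∩ α).card) (h2 : (C ∩ α).card ≤ C.card - 1)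
    (hnot : ¬ (C.card = 3 ∧ (C ∩ α).card = 2)) :
    ∃ i j k D, C = insert i (insert j (insert k D)) ∧ i ∉ insert j (insert k D) ∧
      j ∉ insert k D ∧ k ∉ D ∧ i ∉ α ∧ k ∈ α ∧ (j ∉ α ∨ (D ∩ α).Nonempty) := by
  obtain ⟨i, hiC, j, hjC, k, hkC, hi, hk, hji, hjk, hj⟩ := exists_circuit_triple hC3 h1 h2 hnot
  have hik : i ≠ k := fun h => hi (h ▸ hk)
  refine ⟨i, j, k, C \ {i, j, k}, ?_, ?_, ?_, ?_, hi, hk, hj.imp_right ?_⟩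
  · ext x
    by_cases hx : x = i ∨ x = j ∨ x = k
    · rcases hx with rfl | rfl | rfl <;> simp [*]
    · simp only [not_or] at hx
      simp [hx]
  · simp [hji.symm, hik]
  · simp [hjk]
  · simp
  · rintro ⟨l, hl, hlj, hlk⟩
    rw [mem_inter] at hl
    have hli : l ≠ i := fun h => hi (h ▸ hl.2)
    exact ⟨l, by simp [hl, hlj, hlk, hli]⟩

namespace MatroidRk

variable {n : ℕ} {M : MatroidRk n} {C S : Finset (Fin n)} {e : Fin n}

theorem r_empty (M : MatroidRk n) : M.r ∅ = 0 := Nat.le_zero.1 (M.le_card ∅)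

theorem IsCircuit.r_insert (hC : M.IsCircuit C) (hS : insert e S ⊂ C) (he : e ∉ S) :
    M.r (insert e S) = M.r S + 1 := by
  rw [hC.2 _ hS, hC.2 _ ((subset_insert e S).trans_ssubset hS), card_insert_of_notMem he]

theorem IsCircuit.r_eq_of_insert_eq (hC : M.IsCircuit C) (h : insert e S = C) (he : e ∉ S) :
    M.r C = M.r S := by
  have hS : S ⊂ C := h ▸ ssubset_insert he
  have hdep : M.r C ≠ C.card := hC.1
  have hcard : C.card = S.card + 1 := h ▸ card_insert_of_notMem he
  have hle := M.le_card C
  have hmono := M.mono hS.subset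
  rw [hC.2 S hS] at hmono ⊢
  omega

end MatroidRk

theorem rUone_empty (n k : ℕ) : rUone n k ∅ = 0 := by simp [rUone]

theorem rUone_insert_of_notMem {n k : ℕ} {e : Fin n} (he : e ∉ alphaSet n k) (S : Finset (Fin n)) :
    rUone n k (insert e S) = rUone n k S := by
  rw [rUone, rUone, insert_inter_of_notMem he]

theorem rUone_insert_of_nonempty {n k : ℕ} (e : Fin n) {S : Finset (Fin n)}
    (h : (S ∩ alphaSet n k).Nonempty) : rUone n k (insert e S) = rUone n k S := by
  rw [rUone, rUone, if_pos h, if_pos (h.mono (inter_subset_inter_right (subset_insert e S)))]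

namespace MatroidRk

variable {n k : ℕ} {M : MatroidRk n} {C S : Finset (Fin n)} {e : Fin n}

theorem IsCircuit.rr_add_rUone_insert (hC : M.IsCircuit C) (hS : insert e S ⊂ C) (he : e ∉ S)
    (hu : rUone n k (insert e S) = rUone n k S) (a b : ℝ) :
    a * M.rr (insert e S) + b * rUone n k (insert e S) = a * M.rr S + b * rUone n k S + a := by
  simp only [rr, hC.r_insert hS he, hu]
  push_cast
  ring

theorem IsCircuit.rr_add_rUone_eq_of_insert_eq (hC : M.IsCircuit C) (h : insert e S = C)
    (he : e ∉ S) (hS : (S ∩ alphaSet n k).Nonempty) (a b : ℝ) :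
    a * M.rr C + b * rUone n k C = a * M.rr S + b * rUone n k S := by
  rw [rr, rr, hC.r_eq_of_insert_eq h he, ← h, rUone_insert_of_nonempty e hS]

end MatroidRk

theorem exists_log_of_isEntropic_circuit {n n' : ℕ} {M : MatroidRk n} {i j k : Fin n}
    {D : Finset (Fin n)} (hC : M.IsCircuit (insert i (insert j (insert k D))))
    (hiC : i ∉ insert j (insert k D)) (hjC : j ∉ insert k D) (hkD : k ∉ D)
    (hi : i ∉ alphaSet n n') (hk : k ∈ alphaSet n n')
    (hj : j ∉ alphaSet n n' ∨ (D ∩ alphaSet n n').Nonempty) {a b : ℝ}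
    (hent : IsEntropic fun A => a * M.rr A + b * rUone n n' A) :
    ∃ v : ℕ, a = Real.log v := by
  obtain ⟨N, p, X, hp, hs, hE⟩ := hent
  simp only [mem_insert, not_or] at hiC hjC hE
  obtain ⟨hij, hik, hiD⟩ := hiC
  obtain ⟨hjk, hjD⟩ := hjC
  have hkα {S} (hS : k ∈ S) : (S ∩ alphaSet n n').Nonempty := ⟨k, mem_inter.2 ⟨hS, hk⟩⟩
  have hI₀ : a * M.rr {i} + b * rUone n n' {i} = a := by
    simpa [MatroidRk.rr, M.r_empty, rUone_empty] using hC.rr_add_rUone_insert (S := ∅)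
      (ssubset_iff.2 ⟨j, by grind, by grind⟩) (notMem_empty i) (rUone_insert_of_notMem hi ∅) a b
  have hID := hC.rr_add_rUone_insert (ssubset_iff.2 ⟨j, by grind, by grind⟩) hiD
    (rUone_insert_of_notMem hi D) a b
  have hIKD := hC.rr_add_rUone_insert (S := insert k D) (ssubset_iff.2 ⟨j, by grind, by grind⟩)
    (by grind) (rUone_insert_of_notMem hi _) a b
  have hIJD := hC.rr_add_rUone_insert (S := insert j D) (ssubset_iff.2 ⟨k, by grind, by grind⟩)
    (by grind) (rUone_insert_of_notMem hi _) a b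
  have hJD := hC.rr_add_rUone_insert (ssubset_iff.2 ⟨i, by grind, by grind⟩) hjD
    (hj.elim (fun hj => rUone_insert_of_notMem hj D) (rUone_insert_of_nonempty j)) a b
  have hJKD := hC.rr_add_rUone_insert (ssubset_iff.2 ⟨i, by grind, by grind⟩) (by grind)
    (rUone_insert_of_nonempty j (hkα (mem_insert_self k D))) a b
  have hJ := hC.rr_add_rUone_eq_of_insert_eq (S := insert i (insert k D)) (insert_comm _ _ _)
    (by grind) (hkα (by simp)) a b
  have hI := hC.rr_add_rUone_eq_of_insert_eq rfl (by grind) (hkα (by simp)) a b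
  rw [← insert_comm] at hJ
  simp only [insert_eq, hE] at hI₀ hID hIKD hIJD hJD hJKD hJ hI
  refine (exists_Hent_joint_eq_log X hp hs (I := {i}) (J := {j}) (K := {k}) (D := D)
    ?_ ?_ ?_ ?_ ?_ ?_).imp fun v hv => hI₀ ▸ hv
  all_goals linarith

theorem stmt18_general (n n' : ℕ)
    (M : MatroidRk n)
    (C : Finset (Fin n)) (hC : M.IsCircuit C) (hC3 : 3 ≤ C.card)
    (h1 : 1 ≤ (C ∩ alphaSet n n').card) (h2 : (C ∩ alphaSet n n').card ≤ C.card - 1)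
    (hnot : ¬ (C.card = 3 ∧ (C ∩ alphaSet n n').card = 2))
    (a b : ℝ) (ha : 0 < a)
    (hent : IsEntropic (fun A => a * M.rr A + b * rUone n n' A)) :
    ∃ v : ℤ, 2 ≤ v ∧ a = Real.log (v : ℝ) := by
  obtain ⟨i, j, k, D, rfl, hiC, hjC, hkD, hi, hk, hj⟩ := exists_circuit_split hC3 h1 h2 hnot
  obtain ⟨v, rfl⟩ := exists_log_of_isEntropic_circuit hC hiC hjC hkD hi hk hj hent
  have hv : 1 < v := by
    by_contra! hv
    interval_cases v <;> simp at ha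
  exact ⟨v, by omega, by norm_cast⟩

/-- for `M` of rank `≥ 2` spanning an extreme ray of `Γ_n` with a circuit
`C`, `|C| ≥ 3`, `1 ≤ |C ∩ α| ≤ |C| - 1` (where `α = {1,…,n'}`), and not
(`|C| = 3` and `|C ∩ α| = 2`), if `a·r_M + b·r_{U_{1,α}}` is entropic with `a, b > 0`,
then `a = log v` for some integer `v ≥ 2`. -/
theorem stmt18 (n n' : ℕ) (hn'1 : 1 ≤ n') (hn'n : n' ≤ n)
    (M : MatroidRk n) (hrk : 2 ≤ M.r Finset.univ) (hext : SpansExtremeRay M.rr)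
    (C : Finset (Fin n)) (hC : M.IsCircuit C) (hC3 : 3 ≤ C.card)
    (h1 : 1 ≤ (C ∩ alphaSet n n').card) (h2 : (C ∩ alphaSet n n').card ≤ C.card - 1)
    (hnot : ¬ (C.card = 3 ∧ (C ∩ alphaSet n n').card = 2))
    (a b : ℝ) (ha : 0 < a) (hb : 0 < b)
    (hent : IsEntropic (fun A => a * M.rr A + b * rUone n n' A)) :
    ∃ v : ℤ, 2 ≤ v ∧ a = Real.log (v : ℝ) :=
  stmt18_general n n' M C hC hC3 h1 h2 hnot a b ha hent
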